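/- Let x be a strongly extreme point of a convex set C in a normed space X and let 0 < λ ≤ 1. Assume that for every η > 0 there exist a weak neighbourhood W of x and a map Φ : W ∩ C → X such that Φ(W ∩ C) ⊆ B(x, η) and sup_{w ∈ W ∩ C} dist((1+λ)Φw − λw, C) < η. Then x is a point of continuity of C, i.e., the identity map on C is weak-to-norm continuous at x. -/

import Mathlib

open Filter Topology Metric

/-! If `w ∈ C` and the point `(1 + λ) x - λ w` beyond `x` is nearly in `C`, say near `c ∈ C`, then
`x` is nearly the midpoint of `c` and `(1 - λ) x + λ w ∈ C`. Strong extremality forces these two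
points together, and their difference is `2 λ (w - x)` up to a small error, so `w` is close to `x`.
The maps `Φ` supply such a `c` for every `w` in a weak neighbourhood of `x`. -/

section

variable {X : Type*} [SeminormedAddCommGroup X] [Module ℝ X] {C : Set X} {x : X}

def IsStronglyExtremePoint (C : Set X) (x : X) : Prop :=
  ∀ y z : ℕ → X, (∀ n, y n ∈ C) → (∀ n, z n ∈ C) →
    Tendsto (fun n => ‖x - (1 / 2 : ℝ) • (y n + z n)‖) atTop (𝓝 0) →
    Tendsto (fun n => ‖y n - z n‖) atTop (𝓝 0)

theorem IsStronglyExtremePoint.exists_pos_forall_norm_sub_lt (hx : IsStronglyExtremePoint C x)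
    {ε : ℝ} (hε : 0 < ε) :
    ∃ η > 0, ∀ y ∈ C, ∀ z ∈ C, ‖x - (1 / 2 : ℝ) • (y + z)‖ < η → ‖y - z‖ < ε := by
  by_contra! hne
  choose y hy z hz hmid hfar using fun n : ℕ => hne (1 / (n + 1)) Nat.one_div_pos_of_nat
  have hdiff := hx y z hy hz <| squeeze_zero (fun _ => norm_nonneg _) (fun n => (hmid n).le)
    tendsto_one_div_add_atTop_nhds_zero_nat
  obtain ⟨n, hn⟩ := (hdiff.eventually_lt_const hε).exists
  exact (hfar n).not_gt hn

theorem IsStronglyExtremePoint.exists_pos_forall_dist_lt [NormSMulClass ℝ X]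
    (hx : IsStronglyExtremePoint C x) (hconv : Convex ℝ C) (hxC : x ∈ C) {lam : ℝ} (hlam0 : 0 < lam) (hlam1 : lam ≤ 1)
    {ε : ℝ} (hε : 0 < ε) :
    ∃ η > 0, ∀ w ∈ C, ∀ c ∈ C, dist ((1 + lam) • x - lam • w) c < η → dist w x < ε := by
  obtain ⟨η, hη, hmid⟩ := hx.exists_pos_forall_norm_sub_lt (mul_pos hlam0 hε)
  refine ⟨min (2 * η) (lam * ε), by positivity, fun w hw c hc hwc => ?_⟩
  rw [dist_eq_norm] at hwc ⊢
  set r := (1 + lam) • x - lam • w - c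
  set y := (1 - lam) • x + lam • w
  have hy : y ∈ C := hconv hxC hw (by linarith) hlam0.le (by ring)
  have hyc : ‖y - c‖ < lam * ε := by
    refine hmid y hy c hc ?_
    have : x - (1 / 2 : ℝ) • (y + c) = (1 / 2 : ℝ) • r := by module
    rw [this, norm_smul, Real.norm_of_nonneg (by norm_num)]
    linarith [min_le_left (2 * η) (lam * ε)]
  have hdiff : (2 * lam) • (w - x) = (y - c) - r := by module
  have hwx : 2 * lam * ‖w - x‖ ≤ ‖y - c‖ + ‖r‖ := by
    rw [← Real.norm_of_nonneg (by positivity : 0 ≤ 2 * lam), ← norm_smul, hdiff]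
    exact norm_sub_le _ _
  nlinarith [min_le_right (2 * η) (lam * ε)]

end

theorem stmt4 {X : Type*} [NormedAddCommGroup X] [NormedSpace ℝ X]
    (C : Set X) (hconv : Convex ℝ C) (x : X) (hx : x ∈ C)
    (hse : ∀ (y z : ℕ → X), (∀ n, y n ∈ C) → (∀ n, z n ∈ C) →
      Tendsto (fun n => ‖x - (1/2 : ℝ) • (y n + z n)‖) atTop (nhds 0) →
      Tendsto (fun n => ‖y n - z n‖) atTop (nhds 0))
    (lam : ℝ) (hlam0 : 0 < lam) (hlam1 : lam ≤ 1)
    (h : ∀ η > (0 : ℝ), ∃ (s : Finset (X →L[ℝ] ℝ)) (δ : ℝ) (Φ : X → X), 0 < δ ∧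
      ∀ w ∈ C, (∀ f ∈ s, |f w - f x| < δ) →
        Φ w ∈ closedBall x η ∧ infDist ((1 + lam) • Φ w - lam • w) C < η) :
    ∀ ε > (0 : ℝ), ∃ (s : Finset (X →L[ℝ] ℝ)) (δ : ℝ), 0 < δ ∧
      ∀ w ∈ C, (∀ f ∈ s, |f w - f x| < δ) → w ∈ closedBall x ε := by
  intro ε hε
  obtain ⟨η, hη, hnear⟩ :=
    IsStronglyExtremePoint.exists_pos_forall_dist_lt hse hconv hx hlam0 hlam1 hε
  obtain ⟨s, δ, Φ, hδ, hΦ⟩ := h (η / 3) (by positivity)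
  refine ⟨s, δ, hδ, fun w hw hweak => ?_⟩
  obtain ⟨hΦx, hΦC⟩ := hΦ w hw hweak
  obtain ⟨c, hc, hΦc⟩ := (infDist_lt_iff ⟨x, hx⟩).1 hΦC
  refine mem_closedBall.2 (hnear w hw c hc ?_).le
  calc dist ((1 + lam) • x - lam • w) c
      ≤ dist ((1 + lam) • x - lam • w) ((1 + lam) • Φ w - lam • w)
          + dist ((1 + lam) • Φ w - lam • w) c := dist_triangle _ _ _
    _ = (1 + lam) * dist x (Φ w) + dist ((1 + lam) • Φ w - lam • w) c := by
        rw [dist_sub_right, dist_smul₀, Real.norm_of_nonneg (by linarith)]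
    _ < η := by
        nlinarith [mem_closedBall'.1 hΦx, dist_nonneg (x := x) (y := Φ w)]
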